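/- arXiv:math/9311207 — 5 statements merged into one kernel-verified Lean document; each statement's English description precedes it below -/
import Mathlib

section
/- For any regular cardinal κ and any cardinal μ < κ, the cardinal (2^{<κ})^+ satisfies the partition relation (2^{<κ})^+ → (κ+1)^2_μ: for every coloring f of pairs from (2^{<κ})^+ into μ colors there is a set of order type κ+1 homogeneous for f. -/
/-!
Fix `x` and build by recursion its branch `a_ξ`: the least ordinal above all earlier `a_η` that
receives from each `a_η` the same colour as `x`. If `a_ξ = x`, then `x` is determined by the
colours `f(a_η, x)` for `η < ξ`; so at most `κ · 2^{<κ}` ordinals occur in their own branch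
before stage `κ`, and some `x < (2^{<κ})⁺` has a branch of length `κ` lying below it. Since
fewer than `κ` colours occur, `κ` many of the `a_ξ` receive the same colour `i` from `x`, and
these together with `x` are `i`-homogeneous because `f(a_η, a_ξ) = f(a_η, x)` for `η < ξ`.
-/

open Cardinal Ordinal

/-- The order type of a set of ordinals (an `Ordinal.{1}` for universe reasons). -/
noncomputable def otype (s : Set Ordinal.{0}) : Ordinal.{1} :=
  Ordinal.type (Subrel ((· < ·) : Ordinal → Ordinal → Prop) (· ∈ s))

/-- `OT s o` means the set of ordinals `s` has order type `o`. -/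
def OT (s : Set Ordinal.{0}) (o : Ordinal.{0}) : Prop := otype s = Ordinal.lift.{1,0} o

/-- `2^{<κ} = sup { 2^μ : μ < κ }`. -/
noncomputable def twoLT (κ : Cardinal.{0}) : Cardinal.{0} := ⨆ μ : Set.Iio κ, 2 ^ (μ : Cardinal)

/-- `X` is `i`-homogeneous for the pair coloring `f`. -/
def Homog {α : Type*} (f : Ordinal → Ordinal → α) (X : Set Ordinal) (i : α) : Prop :=
  ∀ a ∈ X, ∀ b ∈ X, a < b → f a b = i

open Set Order

lemma otype_Iio (o : Ordinal.{0}) : otype (Iio o) = Ordinal.lift.{1} o :=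
  type_lt_Iio o

lemma otype_mono {S T : Set Ordinal.{0}} (h : S ⊆ T) : otype S ≤ otype T :=
  type_mono h

lemma card_otype (S : Set Ordinal.{0}) : (otype S).card = #S :=
  card_type _

lemma otype_image {g : Ordinal.{0} → Ordinal.{0}} {S : Set Ordinal.{0}} (hg : StrictMonoOn g S) :
    otype (g '' S) = otype S :=
  (hg.orderIso g S).ordinalType_congr.symm

lemma otype_insert_of_forall_lt {S : Set Ordinal.{0}} {x : Ordinal.{0}} (hx : ∀ a ∈ S, a < x) :
    otype (insert x S) = otype S + 1 := by
  let g : WithTop S → ↥(insert x S) := WithTop.recTopCoe ⟨x, mem_insert x S⟩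
    fun a => ⟨a, mem_insert_of_mem x a.2⟩
  have hg : StrictMono g := by
    intro a b hab
    induction a with
    | top => exact absurd hab not_top_lt
    | coe a =>
      induction b with
      | top => exact hx a a.2
      | coe b => exact (WithTop.coe_lt_coe.mp hab : a < b)
  have hsurj : Function.Surjective g := by
    rintro ⟨b, rfl | hb⟩
    · exact ⟨⊤, rfl⟩
    · exact ⟨(⟨b, hb⟩ : S), rfl⟩
  change typeLT _ = typeLT _ + 1
  rw [← (hg.orderIsoOfSurjective g hsurj).ordinalType_congr]
  calc typeLT (WithTop S) = Ordinal.type (Sum.Lex (α := S) (β := PUnit.{2}) (· < ·) (· < ·)) :=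
        Ordinal.type_eq.2 ⟨(WithTop.orderIsoSumLexPUnit (α := S)).toRelIsoLT⟩
    _ = typeLT S + 1 := by rw [type_sum_lex, type_eq_one_of_unique (α := PUnit)]

lemma le_twoLT {κ ν : Cardinal.{0}} (h : ν < κ) : 2 ^ ν ≤ twoLT κ := by
  refine le_ciSup (f := fun ν : Iio κ => (2 : Cardinal) ^ (ν : Cardinal)) ⟨2 ^ κ, ?_⟩ ⟨ν, h⟩
  rintro _ ⟨ν, rfl⟩
  exact power_le_power_left two_ne_zero ν.2.le

lemma self_le_twoLT (κ : Cardinal.{0}) : κ ≤ twoLT κ :=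
  le_of_not_gt fun h => (le_twoLT h).not_gt (cantor _)

lemma power_le_twoLT {κ μ ν : Cardinal.{0}} (hκ : ℵ₀ ≤ κ) (hμ : μ < κ) (hν : ν < κ) :
    μ ^ ν ≤ twoLT κ :=
  calc μ ^ ν ≤ (2 ^ μ) ^ ν := power_le_power_right (cantor μ).le
    _ = 2 ^ (μ * ν) := (power_mul ..).symm
    _ ≤ twoLT κ := le_twoLT (mul_lt_of_lt hκ hμ hν)

lemma infinite_pigeonhole_otype {κ μ : Cardinal.{0}} (hκ : κ.IsRegular) (hμ : μ < κ)
    {g : Ordinal.{0} → Ordinal.{0}} (hg : ∀ ξ, g ξ < μ.ord) :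
    ∃ T ⊆ Iio κ.ord, otype T = Ordinal.lift.{1} κ.ord ∧ ∃ i, ∀ ξ ∈ T, g ξ = i := by
  have hκo : #(Iio κ.ord) = Cardinal.lift.{1} κ := by rw [Cardinal.mk_Iio_ordinal, card_ord]
  let G : Iio κ.ord → Iio μ.ord := fun ξ => ⟨g ξ, hg ξ⟩
  obtain ⟨i, hi⟩ := infinite_pigeonhole G (by rw [hκo]; exact aleph0_le_lift.2 hκ.aleph0_le) (by
    rw [hκo, Cardinal.mk_Iio_ordinal, card_ord, ← lift_ord, ← lift_cof, hκ.cof_ord]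
    exact lift_lt.2 hμ)
  refine ⟨Subtype.val '' (G ⁻¹' {i}), Subtype.coe_image_subset _ _, le_antisymm ?_ ?_, i, ?_⟩
  · exact (otype_mono (Subtype.coe_image_subset _ _)).trans_eq (otype_Iio _)
  · rw [lift_ord, ord_le, card_otype, mk_image_eq Subtype.val_injective, hi, hκo]
  · rintro _ ⟨ξ, hξ, rfl⟩
    exact congrArg Subtype.val hξ

namespace ErdosRado

variable {α : Type*} {f : Ordinal → Ordinal → α} {x y ξ η : Ordinal}

noncomputable def branch (f : Ordinal → Ordinal → α) (x : Ordinal) : Ordinal → Ordinal :=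
  Ordinal.lt_wf.fix fun ξ a => sInf {b | ∀ η (h : η < ξ), a η h < b ∧ f (a η h) b = f (a η h) x}

lemma branch_eq (f : Ordinal → Ordinal → α) (x ξ : Ordinal) :
    branch f x ξ =
      sInf {b | ∀ η < ξ, branch f x η < b ∧ f (branch f x η) b = f (branch f x η) x} :=
  Ordinal.lt_wf.fix_eq _ ξ

lemma branch_le (h : ∀ η < ξ, branch f x η < x) : branch f x ξ ≤ x := by
  rw [branch_eq]
  exact csInf_le' fun η hη => ⟨h η hη, rfl⟩

lemma branch_spec (h : ∀ η < ξ, branch f x η < x) (hη : η < ξ) :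
    branch f x η < branch f x ξ ∧ f (branch f x η) (branch f x ξ) = f (branch f x η) x := by
  have hmem := csInf_mem (s := {b | ∀ η < ξ, branch f x η < b ∧
    f (branch f x η) b = f (branch f x η) x}) ⟨x, fun η hη => ⟨h η hη, rfl⟩⟩
  rw [← branch_eq] at hmem
  exact hmem η hη

lemma strictMonoOn_branch {o : Ordinal} (h : ∀ ξ < o, branch f x ξ < x) :
    StrictMonoOn (branch f x) (Iio o) :=
  fun _ _ _ hξ hηξ => (branch_spec (fun ζ hζ => h ζ (hζ.trans hξ)) hηξ).1

lemma exists_le_branch_eq_self (h : x ≤ branch f x ξ) : ∃ η ≤ ξ, branch f x η = x := by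
  induction ξ using WellFoundedLT.induction with
  | _ ξ IH =>
    by_cases hlt : ∀ η < ξ, branch f x η < x
    · exact ⟨ξ, le_rfl, (branch_le hlt).antisymm h⟩
    · push Not at hlt
      obtain ⟨η, hηξ, hη⟩ := hlt
      obtain ⟨ζ, hζη, hζ⟩ := IH η hηξ hη
      exact ⟨ζ, hζη.trans hηξ.le, hζ⟩

lemma branch_congr (h : ∀ η < ξ, f (branch f x η) x = f (branch f y η) y) :
    ∀ η ≤ ξ, branch f x η = branch f y η := by
  intro η
  induction η using WellFoundedLT.induction with
  | _ η IH =>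
    intro hη
    rw [branch_eq, branch_eq]
    congr 1
    ext b
    refine forall₂_congr fun γ hγ => ?_
    rw [h γ (hγ.trans_le hη), IH γ hγ (hγ.le.trans hη)]

/-- A fixed point `x` of `branch f · ξ` is determined by the colours it receives from the
earlier terms of its branch. -/
lemma mk_setOf_branch_eq_self_le {α : Type (u + 1)} {f : Ordinal.{u} → Ordinal.{u} → α}
    {C : Set α} (hf : ∀ a b, f a b ∈ C) (ξ : Ordinal.{u}) :
    #{x | branch f x ξ = x} ≤ #C ^ #(Iio ξ) := by
  rw [power_def]
  refine mk_le_of_injective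
    (f := fun x : {x | branch f x ξ = x} => fun η : Iio ξ => (⟨f (branch f x η) x, hf _ _⟩ : C)) ?_
  rintro ⟨x, hx⟩ ⟨y, hy⟩ h
  refine Subtype.ext ?_
  calc x = branch f x ξ := hx.symm
    _ = branch f y ξ :=
      branch_congr (fun η hη => congrArg Subtype.val (congrFun h ⟨η, hη⟩)) ξ le_rfl
    _ = y := hy

/-- Otherwise every `x < (2^{<κ})⁺` is a fixed point of `branch f · ξ` for some `ξ < κ`, and
there are at most `κ · 2^{<κ}` such fixed points. -/
lemma exists_forall_branch_lt {κ μ : Cardinal.{0}} (hκ : ℵ₀ ≤ κ) (hμ : μ < κ)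
    {f : Ordinal.{0} → Ordinal.{0} → Ordinal.{0}} (hf : ∀ a b, f a b < μ.ord) :
    ∃ x < (succ (twoLT κ)).ord, ∀ ξ < κ.ord, branch f x ξ < x := by
  by_contra! h
  have hcover : Iio (succ (twoLT κ)).ord ⊆ ⋃ ξ : Iio κ.ord, {x | branch f x ξ = x} := by
    intro x hx
    obtain ⟨ξ, hξ, hle⟩ := h x hx
    obtain ⟨η, hηξ, hη⟩ := exists_le_branch_eq_self hle
    exact mem_iUnion.2 ⟨⟨η, hηξ.trans_lt hξ⟩, hη⟩
  have hfixed : ∀ ξ : Iio κ.ord, #{x | branch f x ξ = x} ≤ Cardinal.lift.{1} (twoLT κ) := by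
    rintro ⟨ξ, hξ⟩
    calc _ ≤ #(Iio μ.ord) ^ #(Iio ξ) := mk_setOf_branch_eq_self_le hf ξ
      _ = Cardinal.lift.{1} (μ ^ ξ.card) := by
        rw [Cardinal.mk_Iio_ordinal, Cardinal.mk_Iio_ordinal, card_ord, lift_power]
      _ ≤ Cardinal.lift.{1} (twoLT κ) := lift_le.2 (power_le_twoLT hκ hμ (lt_ord.1 hξ))
  have hlam : ℵ₀ ≤ twoLT κ := hκ.trans (self_le_twoLT κ)
  have hsucc_le : Cardinal.lift.{1} (succ (twoLT κ)) ≤ Cardinal.lift.{1} (twoLT κ) :=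
    calc Cardinal.lift.{1} (succ (twoLT κ)) = #(Iio (succ (twoLT κ)).ord) := by
          rw [Cardinal.mk_Iio_ordinal, card_ord]
      _ ≤ #(⋃ ξ : Iio κ.ord, {x | branch f x ξ = x}) := mk_le_mk_of_subset hcover
      _ ≤ #(Iio κ.ord) * ⨆ ξ : Iio κ.ord, #{x | branch f x ξ = x} := mk_iUnion_le _
      _ ≤ Cardinal.lift.{1} κ * Cardinal.lift.{1} (twoLT κ) :=
          mul_le_mul' (by rw [Cardinal.mk_Iio_ordinal, card_ord]) (ciSup_le' hfixed)
      _ = Cardinal.lift.{1} (twoLT κ) := by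
          rw [← Cardinal.lift_mul, mul_eq_max hκ hlam, max_eq_right (self_le_twoLT κ)]
  exact (lt_succ (twoLT κ)).not_ge (lift_le.1 hsucc_le)

lemma homog_insert_image_branch {o : Ordinal} {T : Set Ordinal} {i : α} (hT : T ⊆ Iio o)
    (hx : ∀ ξ < o, branch f x ξ < x) (hi : ∀ ξ ∈ T, f (branch f x ξ) x = i) :
    Homog f (insert x (branch f x '' T)) i := by
  rintro a (rfl | ⟨η, hη, rfl⟩) b (rfl | ⟨ξ, hξ, rfl⟩) hab
  · exact absurd hab (lt_irrefl _)
  · exact absurd (hab.trans (hx ξ (hT hξ))) (lt_irrefl _)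
  · exact hi η hη
  · have hηξ : η < ξ := (strictMonoOn_branch hx).lt_iff_lt (hT hη) (hT hξ) |>.1 hab
    rw [(branch_spec (fun ζ hζ => hx ζ (hζ.trans (hT hξ))) hηξ).2, hi η hη]

end ErdosRado

open ErdosRado

/-- **Erdős–Rado**: if `κ` is regular and `μ < κ` then `(2^{<κ})⁺ → (κ+1)²_μ`. -/
theorem erdosRado (κ μ : Cardinal.{0}) (hκ : κ.IsRegular) (hμ : μ < κ)
    (f : Ordinal → Ordinal → Ordinal) (hf : ∀ a b, f a b < μ.ord) :
    ∃ X ⊆ Set.Iio (Order.succ (twoLT κ)).ord,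
      OT X (κ.ord + 1) ∧ ∃ i, Homog f X i := by
  obtain ⟨x, hxθ, hx⟩ := exists_forall_branch_lt hκ.aleph0_le hμ hf
  obtain ⟨T, hTκ, hT, i, hi⟩ :=
    infinite_pigeonhole_otype hκ hμ (g := fun ξ => f (branch f x ξ) x) fun _ => hf _ _
  refine ⟨insert x (branch f x '' T), ?_, ?_, i, homog_insert_image_branch hTκ hx hi⟩
  · rintro a (rfl | ⟨ξ, hξ, rfl⟩)
    exacts [hxθ, (hx ξ (hTκ hξ)).trans hxθ]
  · rw [OT, otype_insert_of_forall_lt (by rintro _ ⟨ξ, hξ, rfl⟩; exact hx ξ (hTκ hξ)),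
      otype_image ((strictMonoOn_branch hx).mono hTκ), hT, Ordinal.lift_add, Ordinal.lift_one]
end

section
/- Let κ be regular, λ = (2^{<κ})^+, and μ < κ. For every f : [λ]^2 → μ there exist A ⊆ λ and i < μ such that A is i-homogeneous and either |A| = λ and i = 0, or A has order type κ+1 and i > 0. In short: λ → (λ, (κ+1)_{μ-1})^2. -/
open Cardinal Ordinal

/-!
Write `σ = 2^{<κ}` and `λ = σ⁺`. For a set `P` of pairs `(x, i)` let `T_P` be the set of `y < λ`
lying above every such `x` with `f x y = i`, and let `Z_P` be the points of `T_P` joined in colour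
`0` to all smaller points of `T_P`; `Z_P` is `0`-homogeneous, so we are done if some `Z_P` has
size `λ`. Otherwise every `Z_P` is bounded below the regular cardinal `λ`. Since `σ^{<κ} = σ`,
for each `d < λ` there are at most `σ` sets `P ⊆ d × μ` of size `< κ`, so taking a fixed point of
cofinality `κ` of the resulting bounding function gives `δ < λ` with `sup Z_P < δ` for all such
`P ⊆ δ × μ`. Now let `G ⊆ δ` be a set of size `< κ` on which `f x y = f x δ ≠ 0` for `x < y`. For
`P = {(x, f x δ) | x ∈ G}` we have `δ ∈ T_P \ Z_P`, which yields `x < δ` in `T_P` with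
`f x δ ≠ 0`, and `G ∪ {x}` is again such a set. A maximal `G` therefore has size `κ`; a colour
class of `x ↦ f x δ` still has size `κ`, and its first `κ` elements together with `δ` form the
required set of order type `κ + 1`.
-/

open Set Order

universe u

abbrev BoundedSet (W : Type u) [Preorder W] : Type u := {p : W × Set W // p.2 ⊆ Iio p.1}

namespace Cardinal

theorem twoLT_eq_powerlt (κ : Cardinal) : twoLT κ = 2 ^< κ := rfl

theorem le_powerlt_two (κ : Cardinal.{u}) : κ ≤ 2 ^< κ := by
  by_contra! h
  exact (cantor _).not_ge (le_powerlt 2 h)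

theorem exists_le_mk_Iio_toType {κ c : Cardinal.{u}} (hc : c < κ) :
    ∃ i : κ.ord.ToType, c ≤ #(Iio i) := by
  have h : c.ord ∈ Iio κ.ord := ord_lt_ord.2 hc
  refine ⟨ToType.mk ⟨c.ord, h⟩, le_of_eq ?_⟩
  have := ToType.mk_symm_apply_coe (ToType.mk ⟨c.ord, h⟩)
  rw [RelIso.symm_apply_apply] at this
  exact (card_ord c).symm.trans ((congrArg card this).trans (card_typein _))

theorem mk_pi_le_of_forall_exists_lt {ι X W : Type u} [LT W] (r : X → W) {B : Cardinal.{u}}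
    (hbdd : ∀ g : ι → X, ∃ w, ∀ i, r (g i) < w) (hB : ∀ w, #(ι → {x // r x < w}) ≤ B) :
    #(ι → X) ≤ #W * B := by
  have hcover : (Set.univ : Set (ι → X)) ⊆ ⋃ w, {g | ∀ i, r (g i) < w} :=
    fun g _ => mem_iUnion.2 (hbdd g)
  calc #(ι → X) = #(Set.univ : Set (ι → X)) := mk_univ.symm
    _ ≤ #(⋃ w, {g : ι → X | ∀ i, r (g i) < w}) := mk_le_mk_of_subset hcover
    _ ≤ #W * ⨆ w, #{g : ι → X | ∀ i, r (g i) < w} := mk_iUnion_le _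
    _ ≤ #W * B := by
      gcongr
      refine ciSup_le' fun w => le_trans ?_ (hB w)
      refine mk_le_of_injective (f := fun g i => ⟨g.1 i, g.2 i⟩) fun g g' h => ?_
      exact Subtype.ext (funext fun i => congrArg Subtype.val (congrFun h i))

theorem mk_boundedSet_lt_le {W : Type u} [Preorder W] (w : W) :
    #{x : BoundedSet W // x.1.1 < w} ≤ #(Iio w) * 2 ^ #(Iio w) := by
  rw [← mk_powerset, ← mk_setProd]
  refine mk_le_of_injective
    (f := fun x => ⟨x.1.1, x.2, x.1.2.trans (Iio_subset_Iio x.2.le)⟩) fun x y h => ?_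
  have hval := congrArg Subtype.val h
  exact Subtype.ext (Subtype.ext hval)

theorem powerlt_two_le_mk_boundedSet (κ : Cardinal.{u}) : 2 ^< κ ≤ #(BoundedSet κ.ord.ToType) :=
  powerlt_le.2 fun c hc => by
    obtain ⟨i, hi⟩ := exists_le_mk_Iio_toType hc
    calc 2 ^ c ≤ 2 ^ #(Iio i) := power_le_power_left two_ne_zero hi
      _ = #(Set (Iio i)) := mk_set.symm
      _ ≤ _ := by
        refine mk_le_of_injective (f := fun s => ⟨(i, Subtype.val '' s), ?_⟩) fun s t h => ?_
        · rintro _ ⟨x, -, rfl⟩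
          exact x.2
        · exact Subtype.val_injective.image_injective (congrArg (·.1.2) h)

theorem powerlt_two_power_le {κ ν : Cardinal.{u}} (hκ : κ.IsRegular) (hν : ν < κ) :
    (2 ^< κ) ^ ν ≤ 2 ^< κ := by
  let W := κ.ord.ToType
  let X := BoundedSet W
  have hbdd : ∀ g : ν.out → X, ∃ w, ∀ j, (g j).1.1 < w := by
    intro g
    have hcof : #(range fun j => (g j).1.1) < Order.cof W := by
      rw [cof_toType, hκ.cof_ord]
      exact mk_range_le.trans_lt (by rwa [mk_out])
    obtain ⟨w, hw⟩ := not_isCofinal_iff.1 (mt Order.cof_le hcof.not_ge)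
    exact ⟨w, fun j => hw _ (mem_range_self j)⟩
  have hpiece : ∀ w : W, #(ν.out → {x : X // x.1.1 < w}) ≤ 2 ^< κ := by
    intro w
    have hw : #(Iio w) < κ := (mk_Iio_lt w (by simp [W])).trans_eq (mk_ord_toType κ)
    calc #(ν.out → {x : X // x.1.1 < w}) = #{x : X // x.1.1 < w} ^ ν := by
          rw [← power_def, mk_out]
      _ ≤ (2 ^ #(Iio w) * 2 ^ #(Iio w)) ^ ν :=
          power_le_power_right ((mk_boundedSet_lt_le w).trans (by gcongr; exact (cantor _).le))
      _ = 2 ^ ((#(Iio w) + #(Iio w)) * ν) := by rw [← power_add, power_mul]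
      _ ≤ 2 ^< κ := le_powerlt 2 (mul_lt_of_lt hκ.aleph0_le
          (add_lt_of_lt hκ.aleph0_le hw hw) hν)
  calc (2 ^< κ) ^ ν ≤ #X ^ ν := power_le_power_right (powerlt_two_le_mk_boundedSet κ)
    _ = #(ν.out → X) := by rw [← power_def, mk_out]
    _ ≤ #W * 2 ^< κ := mk_pi_le_of_forall_exists_lt (fun x : X => x.1.1) hbdd hpiece
    _ ≤ 2 ^< κ * 2 ^< κ := by gcongr; exact (mk_ord_toType κ).trans_le (le_powerlt_two κ)
    _ = 2 ^< κ := mul_eq_self (hκ.aleph0_le.trans (le_powerlt_two κ))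

theorem mk_subset_mk_lt_le {α : Type u} (s : Set α) {κ σ : Cardinal.{u}} (hσ : ℵ₀ ≤ σ)
    (hs : #s ≤ σ) (hκσ : κ ≤ σ) (hpow : ∀ ν < κ, σ ^ ν ≤ σ) :
    #{t : Set α | t ⊆ s ∧ #t < κ} ≤ σ := by
  have hcover : {t : Set α | t ⊆ s ∧ #t < κ} ⊆
      ⋃ i : κ.ord.ToType, {t | t ⊆ s ∧ #t ≤ #(Iio i)} := by
    rintro t ⟨hts, ht⟩
    obtain ⟨i, hi⟩ := exists_le_mk_Iio_toType ht
    exact mem_iUnion.2 ⟨i, hts, hi⟩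
  calc #{t : Set α | t ⊆ s ∧ #t < κ}
      ≤ #(⋃ i : κ.ord.ToType, {t | t ⊆ s ∧ #t ≤ #(Iio i)}) := mk_le_mk_of_subset hcover
    _ ≤ #κ.ord.ToType * ⨆ i : κ.ord.ToType, #{t | t ⊆ s ∧ #t ≤ #(Iio i)} := mk_iUnion_le _
    _ ≤ σ * σ := by
      refine mul_le_mul' (by rwa [mk_ord_toType]) (ciSup_le' fun i => ?_)
      have hi : #(Iio i) < κ := (mk_Iio_lt i (by simp)).trans_eq (mk_ord_toType κ)
      exact (mk_bounded_subset_le s _).trans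
        ((power_le_power_right (max_le hs hσ)).trans (hpow _ hi))
    _ = σ := mul_eq_self hσ

end Cardinal

namespace Ordinal

theorem apply_lt_deriv_of_monotone {F : Ordinal → Ordinal} (hF : Monotone F) {o d : Ordinal}
    (ho : IsSuccLimit o) (hd : d < deriv F o) : F d < deriv F o := by
  obtain ⟨a, hao, hda⟩ := ((isNormal_deriv F).lt_iff_exists_lt ho).1 hd
  calc F d ≤ F (deriv F a + 1) := hF (hda.le.trans le_self_add)
    _ ≤ nfp F (deriv F a + 1) := iterate_le_nfp F _ 1
    _ = deriv F (a + 1) := (deriv_add_one F a).symm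
    _ < deriv F o := deriv_strictMono F (ho.add_one_lt hao)

theorem exists_cof_eq_forall_apply_lt {F : Ordinal → Ordinal} (hF : Monotone F)
    {κ c : Cardinal} (hκ : κ.IsRegular) (hc : c.IsRegular) (hκc : κ < c)
    (hFc : ∀ d < c.ord, F d < c.ord) : ∃ δ < c.ord, δ.cof = κ ∧ ∀ d < δ, F d < δ := by
  have hK : IsSuccLimit κ.ord := isSuccLimit_ord hκ.aleph0_le
  refine ⟨deriv F κ.ord, deriv_lt_ord hc (hκ.aleph0_le.trans_lt hκc).ne' hFc (ord_lt_ord.2 hκc),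
    ?_, fun d hd => apply_lt_deriv_of_monotone hF hK hd⟩
  rw [cof_map_of_isNormal (isNormal_deriv F) hK, hκ.cof_ord]

theorem exists_lt_forall_lt_of_mk_lt_cof {s : Set Ordinal.{u}} {δ : Ordinal.{u}}
    (hs : #s < Cardinal.lift.{u + 1} δ.cof) (hsδ : ∀ x ∈ s, x < δ) : ∃ d < δ, ∀ x ∈ s, x < d := by
  refine ⟨sSup ((· + 1) '' s), sSup_add_one_lt_of_lt_cof (by rwa [← lift_cof]) hsδ,
    fun x hx => (lt_add_one x).trans_le (le_csSup ⟨δ, ?_⟩ (mem_image_of_mem _ hx))⟩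
  rintro _ ⟨y, hy, rfl⟩
  exact add_one_le_of_lt (hsδ y hy)

end Ordinal

theorem mk_small_subset_Iio_prod_le {κ μ : Cardinal.{0}} (hκ : κ.IsRegular) (hμ : μ < κ)
    {d : Ordinal.{0}} (hd : d < (succ (2 ^< κ)).ord) :
    #{P : Set (Ordinal × Ordinal) | P ⊆ Iio d ×ˢ Iio μ.ord ∧ #P < Cardinal.lift.{1} κ} ≤
      Cardinal.lift.{1} (2 ^< κ) := by
  have hσ : ℵ₀ ≤ 2 ^< κ := hκ.aleph0_le.trans (le_powerlt_two κ)
  refine mk_subset_mk_lt_le _ (aleph0_le_lift.2 hσ) ?_ (Cardinal.lift_le.2 (le_powerlt_two κ))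
    fun ν hν => ?_
  · rw [mk_setProd, Cardinal.mk_Iio_ordinal, Cardinal.mk_Iio_ordinal, card_ord,
      ← Cardinal.lift_mul, Cardinal.lift_le]
    have hd' : d.card ≤ 2 ^< κ := lt_succ_iff.1 (lt_ord.1 hd)
    exact (mul_le_mul' hd' (hμ.le.trans (le_powerlt_two κ))).trans (mul_eq_self hσ).le
  · obtain ⟨ν, hνκ, rfl⟩ := lt_lift_iff.1 hν
    rw [← lift_power, Cardinal.lift_le]
    exact powerlt_two_power_le hκ hνκ

theorem exists_forall_small_subset_apply_lt {κ μ : Cardinal.{0}} (hκ : κ.IsRegular) (hμ : μ < κ)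
    (t : Set (Ordinal × Ordinal) → Ordinal) (ht : ∀ P, t P < (succ (2 ^< κ)).ord) :
    ∃ δ < (succ (2 ^< κ)).ord,
      ∀ P ⊆ Iio δ ×ˢ Iio μ.ord, #P < Cardinal.lift.{1} κ → t P < δ := by
  let small : Ordinal → Set (Set (Ordinal × Ordinal)) :=
    fun d => {P | P ⊆ Iio d ×ˢ Iio μ.ord ∧ #P < Cardinal.lift.{1} κ}
  let F : Ordinal → Ordinal := fun d => sSup (t '' small d)
  have hbdd : ∀ d, BddAbove (t '' small d) := fun d => ⟨_, by
    rintro _ ⟨P, -, rfl⟩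
    exact (ht P).le⟩
  have hFmono : Monotone F := fun d d' h => by
    refine csSup_le_csSup (hbdd d') ⟨t ∅, ∅, ⟨empty_subset _, ?_⟩, rfl⟩
      (image_mono fun P hP => ⟨hP.1.trans (prod_mono (Iio_subset_Iio h) le_rfl), hP.2⟩)
    rw [mk_eq_zero]
    exact pos_iff_ne_zero.2 (lift_eq_zero.not.2 hκ.ne_zero)
  have hc : (succ (2 ^< κ)).IsRegular :=
    isRegular_succ (hκ.aleph0_le.trans (le_powerlt_two κ))
  have hFc : ∀ d < (succ (2 ^< κ)).ord, F d < (succ (2 ^< κ)).ord := fun d hd => by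
    refine sSup_lt_of_lt_cof ?_ (by rintro _ ⟨P, -, rfl⟩; exact ht P)
    rw [← lift_cof, hc.cof_ord]
    exact mk_image_le.trans_lt ((mk_small_subset_Iio_prod_le hκ hμ hd).trans_lt
      (lift_lt.2 (lt_succ _)))
  obtain ⟨δ, hδc, hδcof, hδF⟩ :=
    exists_cof_eq_forall_apply_lt hFmono hκ hc ((le_powerlt_two κ).trans_lt (lt_succ _)) hFc
  refine ⟨δ, hδc, fun P hPδ hPκ => ?_⟩
  obtain ⟨d, hdδ, hPd⟩ := exists_lt_forall_lt_of_mk_lt_cof (s := Prod.fst '' P)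
    (by rw [hδcof]; exact mk_image_le.trans_lt hPκ) (by rintro _ ⟨p, hp, rfl⟩; exact (hPδ hp).1)
  have hP : P ∈ small d := ⟨fun p hp => ⟨hPd _ (mem_image_of_mem _ hp), (hPδ hp).2⟩, hPκ⟩
  exact (le_csSup (hbdd d) (mem_image_of_mem t hP)).trans_lt (hδF d hdδ)

theorem otype_range_of_strictMono {o : Ordinal.{0}} {g : Iio o → Ordinal.{0}} (hg : StrictMono g) :
    otype (range g) = Ordinal.lift.{1} o := by
  rw [← type_lt_Iio]
  exact (type_eq.2 ⟨(hg.orderIso g).toRelIsoLT⟩).symm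

theorem exists_strictMono_range_subset {s : Set Ordinal.{0}} {κ : Cardinal.{0}}
    (h : Cardinal.lift.{1} κ ≤ #s) : ∃ g : Iio κ.ord → Ordinal, StrictMono g ∧ range g ⊆ s := by
  have hle : typeLT (Iio κ.ord) ≤ otype s := by
    rw [type_lt_Iio, lift_ord, ord_le]
    exact h
  obtain ⟨e⟩ := type_le_iff'.1 hle
  exact ⟨fun j => (e j).1, fun a b hab => e.map_rel_iff.2 hab, by rintro _ ⟨j, rfl⟩; exact (e j).2⟩

theorem exists_OT_add_one_subset_insert {s : Set Ordinal.{0}} {κ : Cardinal.{0}} {δ : Ordinal.{0}}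
    (h : Cardinal.lift.{1} κ ≤ #s) (hsδ : ∀ x ∈ s, x < δ) :
    ∃ A ⊆ insert δ s, OT A (κ.ord + 1) := by
  obtain ⟨g, hg, hgs⟩ := exists_strictMono_range_subset h
  let g' : Iio (κ.ord + 1) → Ordinal := fun j => if hj : j.1 < κ.ord then g ⟨j, hj⟩ else δ
  have hg' : StrictMono g' := by
    intro a b hab
    have hb : b.1 ≤ κ.ord := lt_add_one_iff.1 b.2
    by_cases ha' : a.1 < κ.ord <;> by_cases hb' : b.1 < κ.ord <;>
      simp only [g', ha', hb', dite_true, dite_false]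
    · exact hg hab
    · exact hsδ _ (hgs (mem_range_self _))
    · exact absurd ((show a.1 < b.1 from hab).trans hb') ha'
    · exact absurd ((show a.1 < b.1 from hab).trans_le hb) ha'
  refine ⟨range g', ?_, ?_⟩
  · rintro _ ⟨j, rfl⟩
    by_cases hj : j.1 < κ.ord
    · simp only [g', hj, dite_true]
      exact mem_insert_of_mem _ (hgs (mem_range_self _))
    · simp only [g', hj, dite_false]
      exact mem_insert δ s
  · rw [OT, otype_range_of_strictMono hg', Ordinal.lift_add, Ordinal.lift_one]

section Coloring

variable (f : Ordinal → Ordinal → Ordinal)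

-- In the proof sketch, `T_P = Iio λ ∩ realizers f P`, `Z_P = zeroEnd f T_P`, and the sets `G`
-- are those with `IsCoherentBelow f δ G`.
def realizers (P : Set (Ordinal × Ordinal)) : Set Ordinal :=
  {y | ∀ p ∈ P, p.1 < y ∧ f p.1 y = p.2}

def zeroEnd (S : Set Ordinal) : Set Ordinal :=
  {y ∈ S | ∀ x ∈ S, x < y → f x y = 0}

def IsCoherentBelow (δ : Ordinal) (G : Set Ordinal) : Prop :=
  ∀ x ∈ G, x < δ ∧ f x δ ≠ 0 ∧ ∀ y ∈ G, x < y → f x y = f x δ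

def HasCoherentExtensions (δ : Ordinal) (c : Cardinal.{1}) : Prop :=
  ∀ G, IsCoherentBelow f δ G → #G < c → ∃ x < δ, f x δ ≠ 0 ∧ ∀ y ∈ G, y < x ∧ f y x = f y δ

theorem homog_zeroEnd (S : Set Ordinal) : Homog f (zeroEnd f S) 0 :=
  fun _ ha _ hb hab => hb.2 _ ha.1 hab

variable {f}

theorem isCoherentBelow_insert {δ x : Ordinal} {G : Set Ordinal} (hG : IsCoherentBelow f δ G)
    (hxδ : x < δ) (hx0 : f x δ ≠ 0) (hxG : ∀ y ∈ G, y < x ∧ f y x = f y δ) :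
    IsCoherentBelow f δ (insert x G) := by
  rintro z (rfl | hz)
  · refine ⟨hxδ, hx0, ?_⟩
    rintro y (rfl | hy) hzy
    · exact absurd hzy (lt_irrefl _)
    · exact absurd hzy (hxG y hy).1.not_gt
  · refine ⟨(hG z hz).1, (hG z hz).2.1, ?_⟩
    rintro y (rfl | hy) hzy
    · exact (hxG z hz).2
    · exact (hG z hz).2.2 y hy hzy

theorem exists_isCoherentBelow_le_mk {δ : Ordinal} {c : Cardinal.{1}}
    (hext : HasCoherentExtensions f δ c) :
    ∃ G, IsCoherentBelow f δ G ∧ c ≤ #G := by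
  obtain ⟨G, hG⟩ := zorn_subset {G | IsCoherentBelow f δ G} fun C hC hchain => by
    refine ⟨⋃₀ C, ?_, fun s hs => subset_sUnion_of_mem hs⟩
    rintro x ⟨s, hsC, hxs⟩
    obtain ⟨hxδ, hx0, hs⟩ := hC hsC x hxs
    refine ⟨hxδ, hx0, fun y ⟨t, htC, hyt⟩ hxy => ?_⟩
    rcases hchain.total hsC htC with hst | hts
    · exact (hC htC x (hst hxs)).2.2 y hyt hxy
    · exact hs y (hts hyt) hxy
  refine ⟨G, hG.prop, not_lt.1 fun hlt => ?_⟩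
  obtain ⟨x, hxδ, hx0, hxG⟩ := hext G hG.prop hlt
  have hxG' : x ∈ G := hG.2 (isCoherentBelow_insert hG.prop hxδ hx0 hxG) (subset_insert x G)
    (mem_insert x G)
  exact lt_irrefl x (hxG x hxG').1

theorem exists_homog_OT_of_isCoherentBelow {κ μ : Cardinal.{0}} (hκ : κ.IsRegular) (hμ : μ < κ)
    (hf : ∀ a b, f a b < μ.ord) {δ : Ordinal} {G : Set Ordinal} (hG : IsCoherentBelow f δ G)
    (hGκ : Cardinal.lift.{1} κ ≤ #G) :
    ∃ A ⊆ Iic δ, ∃ i < μ.ord, Homog f A i ∧ OT A (κ.ord + 1) ∧ 0 < i := by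
  let color : G → Iio μ.ord := fun x => ⟨f x δ, hf _ _⟩
  obtain ⟨i, hi⟩ := infinite_pigeonhole_card color _ hGκ (aleph0_le_lift.2 hκ.aleph0_le) (by
    rw [Cardinal.mk_Iio_ordinal, card_ord, hκ.lift.cof_ord]
    exact lift_lt.2 hμ)
  let H : Set Ordinal := Subtype.val '' (color ⁻¹' {i})
  have hHκ : Cardinal.lift.{1} κ ≤ #H := hi.trans_eq (mk_image_eq Subtype.val_injective).symm
  have hH : ∀ x ∈ H, x ∈ G ∧ f x δ = i := by
    rintro _ ⟨x, hx, rfl⟩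
    exact ⟨x.2, congrArg Subtype.val hx⟩
  obtain ⟨A, hAH, hA⟩ := exists_OT_add_one_subset_insert hHκ fun x hx => (hG x (hH x hx).1).1
  obtain ⟨x, hx⟩ : H.Nonempty := by
    rw [← nonempty_coe_sort, ← mk_ne_zero_iff]
    exact ne_bot_of_le_ne_bot (lift_eq_zero.not.2 hκ.ne_zero) hHκ
  have hle : ∀ y ∈ A, y ≤ δ := fun y hy => by
    rcases hAH hy with rfl | hy
    · exact le_rfl
    · exact (hG y (hH y hy).1).1.le
  refine ⟨A, hle, i, i.2, fun a ha b hb hab => ?_, hA, ?_⟩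
  · have haH : a ∈ H := (hAH ha).resolve_left (hab.trans_le (hle b hb)).ne
    rcases hAH hb with rfl | hbH
    · exact (hH a haH).2
    · exact ((hG a (hH a haH).1).2.2 b (hH b hbH).1 hab).trans (hH a haH).2
  · rw [← (hH x hx).2]
    exact pos_iff_ne_zero.2 (hG x (hH x hx).1).2.1

theorem hasCoherentExtensions_of_forall_sSup_zeroEnd_lt {μ : Cardinal.{0}}
    (hf : ∀ a b, f a b < μ.ord) {Λ δ : Ordinal} {c : Cardinal.{1}} (hδΛ : δ < Λ)
    (hδ : ∀ P ⊆ Iio δ ×ˢ Iio μ.ord, #P < c → sSup (zeroEnd f (Iio Λ ∩ realizers f P)) < δ) :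
    HasCoherentExtensions f δ c := by
  intro G hG hGc
  let P := (fun x => (x, f x δ)) '' G
  have hPδ : P ⊆ Iio δ ×ˢ Iio μ.ord := by
    rintro _ ⟨x, hx, rfl⟩
    exact ⟨(hG x hx).1, hf _ _⟩
  have hδP : δ ∈ Iio Λ ∩ realizers f P := ⟨hδΛ, by rintro _ ⟨x, hx, rfl⟩; exact ⟨(hG x hx).1, rfl⟩⟩
  have hδZ : δ ∉ zeroEnd f (Iio Λ ∩ realizers f P) := fun h =>
    (le_csSup ⟨Λ, fun z hz => hz.1.1.le⟩ h).not_gt (hδ P hPδ (mk_image_le.trans_lt hGc))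
  simp only [zeroEnd, mem_ofPred_eq, not_and, not_forall] at hδZ
  obtain ⟨x, ⟨-, hxP⟩, hxδ, hx0⟩ := hδZ hδP
  exact ⟨x, hxδ, hx0, fun y hy => hxP _ (mem_image_of_mem _ hy)⟩

end Coloring

/-- **Dushnik–Miller–Erdős**: `λ → (λ, (κ+1)_{μ-1})²` for `λ = (2^{<κ})⁺`, `κ` regular, `μ < κ`:
there are `A` and `i < μ` with `A` `i`-homogeneous and either `|A| = λ` with `i = 0`,
or `A` of order type `κ+1` with `i > 0`. -/
theorem dushnikMillerErdos (κ μ : Cardinal.{0}) (hκ : κ.IsRegular) (hμ : μ < κ)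
    (f : Ordinal → Ordinal → Ordinal) (hf : ∀ a b, f a b < μ.ord) :
    ∃ A ⊆ Set.Iio (Order.succ (twoLT κ)).ord, ∃ i < μ.ord, Homog f A i ∧
      ((Cardinal.mk A = Cardinal.lift.{1,0} (Order.succ (twoLT κ)) ∧ i = 0) ∨
        (OT A (κ.ord + 1) ∧ 0 < i)) := by
  rw [twoLT_eq_powerlt]
  set c := succ (2 ^< κ)
  let Z : Set (Ordinal × Ordinal) → Set Ordinal := fun P => zeroEnd f (Iio c.ord ∩ realizers f P)
  have hZ : ∀ P, Z P ⊆ Iio c.ord := fun P y hy => hy.1.1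
  by_cases hlarge : ∃ P, Cardinal.lift.{1} c ≤ #(Z P)
  · obtain ⟨P, hP⟩ := hlarge
    refine ⟨Z P, hZ P, 0, (hf 0 0).trans_le' zero_le, homog_zeroEnd f _, Or.inl ⟨?_, rfl⟩⟩
    refine le_antisymm ((mk_le_mk_of_subset (hZ P)).trans ?_) hP
    rw [Cardinal.mk_Iio_ordinal, card_ord]
  push Not at hlarge
  have hc : c.IsRegular := isRegular_succ (hκ.aleph0_le.trans (le_powerlt_two κ))
  obtain ⟨δ, hδ, hδZ⟩ := exists_forall_small_subset_apply_lt hκ hμ (fun P => sSup (Z P))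
    fun P => sSup_lt_of_lt_cof (by rw [← lift_cof, hc.cof_ord]; exact hlarge P) (hZ P)
  obtain ⟨G, hG, hGκ⟩ := exists_isCoherentBelow_le_mk
    (hasCoherentExtensions_of_forall_sSup_zeroEnd_lt hf hδ hδZ)
  obtain ⟨A, hAδ, i, hi, hA, hOT, hi0⟩ := exists_homog_OT_of_isCoherentBelow hκ hμ hf hG hGκ
  exact ⟨A, fun y hy => (hAδ hy).trans_lt hδ, i, hi, hA, Or.inr ⟨hOT, hi0⟩⟩
end

section
/- Let f : [λ]^2 → k, ρ an ordinal, and σ a finite sequence of colors. If x ⊆ λ is (ρ,σ)-good for f, then for every color i appearing in the range of σ there is a subset y ⊆ x that is i-homogeneous for f and has order type ρ. -/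
open Cardinal Ordinal

/-- `Good f ρ σ x`: `x` is `(ρ,σ)`-good for the coloring `f`.  A singleton is `(ρ,⟨⟩)`-good;
`x` is `(ρ, σ⌢⟨i⟩)`-good iff `x = ⋃_{ξ<ρ} x_ξ` with each `x_ξ` `(ρ,σ)`-good,
`sup x_ξ < inf x_η` for `ξ < η`, and all cross pairs colored `i`. -/
inductive Good (f : Ordinal → Ordinal → ℕ) (ρ : Ordinal.{0}) : List ℕ → Set Ordinal.{0} → Prop
  | nil (a : Ordinal) : Good f ρ [] {a}
  | cons (σ : List ℕ) (i : ℕ) (x : Ordinal → Set Ordinal)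
      (hgood : ∀ ξ < ρ, Good f ρ σ (x ξ))
      (hsep : ∀ ξ < ρ, ∀ η < ρ, ξ < η → sSup (x ξ) < sInf (x η))
      (hcol : ∀ ξ < ρ, ∀ η < ρ, ξ < η → ∀ a ∈ x ξ, ∀ b ∈ x η, f a b = i) :
      Good f ρ (σ ++ [i]) (⋃ ξ ∈ Set.Iio ρ, x ξ)

/- Induct on `σ`. For a color occurring in `σ` before its last entry, recurse into the first
block `x₀`. For the last color `i` of `σ ⌢ ⟨i⟩`, pick one point from each block `x_ξ`: the blocks
are nonempty and, being small sets of ordinals, bounded, so `sup x_ξ < inf x_η` makes the picks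
strictly increasing in `ξ`, and any two of them lie in distinct blocks, hence are colored `i`. -/

theorem OT_empty : OT ∅ 0 := by
  rw [OT, otype, Ordinal.lift_zero, Ordinal.type_eq_zero_iff_isEmpty]
  exact ⟨fun a => a.2⟩

theorem OT_image_Iio {g : Ordinal → Ordinal} {ρ : Ordinal} (hg : StrictMonoOn g (Set.Iio ρ)) :
    OT (g '' Set.Iio ρ) ρ := by
  rw [OT, otype, ← Ordinal.type_lt_Iio]
  exact (hg.orderIso g _).toRelIsoLT.symm.ordinalType_congr

theorem homog_image_of_strictMonoOn {α β : Type*} [LinearOrder β] {f : Ordinal → Ordinal → α}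
    {g : β → Ordinal} {s : Set β} {i : α} (hg : StrictMonoOn g s)
    (hcol : ∀ ξ ∈ s, ∀ η ∈ s, ξ < η → f (g ξ) (g η) = i) : Homog f (g '' s) i := by
  rintro _ ⟨ξ, hξ, rfl⟩ _ ⟨η, hη, rfl⟩ hlt
  exact hcol ξ hξ η hη ((hg.lt_iff_lt hξ hη).1 hlt)

theorem strictMonoOn_of_mem_of_sSup_lt_sInf {x : Ordinal → Set Ordinal} {g : Ordinal → Ordinal}
    {ρ : Ordinal} (hbdd : ∀ ξ < ρ, BddAbove (x ξ)) (hg : ∀ ξ < ρ, g ξ ∈ x ξ)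
    (hsep : ∀ ξ < ρ, ∀ η < ρ, ξ < η → sSup (x ξ) < sInf (x η)) :
    StrictMonoOn g (Set.Iio ρ) := fun ξ hξ η hη hlt =>
  calc g ξ ≤ sSup (x ξ) := le_csSup (hbdd ξ hξ) (hg ξ hξ)
    _ < sInf (x η) := hsep ξ hξ η hη hlt
    _ ≤ g η := csInf_le' (hg η hη)

namespace Good

variable {f : Ordinal → Ordinal → ℕ} {ρ : Ordinal} {σ : List ℕ} {x : Set Ordinal}

theorem nonempty (hρ : 0 < ρ) (h : Good f ρ σ x) : x.Nonempty := by
  induction h with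
  | nil a => exact Set.singleton_nonempty a
  | cons σ i x _ _ _ ih =>
    obtain ⟨a, ha⟩ := ih 0 hρ
    exact ⟨a, Set.mem_biUnion hρ ha⟩

theorem small (h : Good f ρ σ x) : Small.{0} x := by
  induction h with
  | nil a => infer_instance
  | cons σ i x _ _ _ ih =>
    exact @small_biUnion _ _ (Set.Iio ρ) _ (fun ξ _ => x ξ) ih

theorem bddAbove (h : Good f ρ σ x) : BddAbove x :=
  have := h.small
  Ordinal.bddAbove_of_small

theorem exists_homog (hρ : 0 < ρ) (h : Good f ρ σ x) :
    ∀ i ∈ σ, ∃ y ⊆ x, Homog f y i ∧ OT y ρ := by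
  induction h with
  | nil a => simp
  | cons σ j x hgood hsep hcol ih =>
    intro i hi
    rcases List.mem_append.1 hi with hiσ | hij
    · obtain ⟨y, hyx, hhom, hot⟩ := ih 0 hρ i hiσ
      exact ⟨y, hyx.trans (Set.subset_biUnion_of_mem (u := x) hρ), hhom, hot⟩
    · obtain rfl := List.mem_singleton.1 hij
      choose! g hg using fun ξ hξ => (hgood ξ hξ).nonempty hρ
      have hmono : StrictMonoOn g (Set.Iio ρ) :=
        strictMonoOn_of_mem_of_sSup_lt_sInf (fun ξ hξ => (hgood ξ hξ).bddAbove) hg hsep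
      refine ⟨g '' Set.Iio ρ, ?_, ?_, OT_image_Iio hmono⟩
      · rintro _ ⟨ξ, hξ, rfl⟩
        exact Set.mem_biUnion hξ (hg ξ hξ)
      · exact homog_image_of_strictMonoOn hmono fun ξ hξ η hη hlt =>
          hcol ξ hξ η hη hlt _ (hg ξ hξ) _ (hg η hη)

end Good

theorem good_homogeneous_subset_general (f : Ordinal → Ordinal → ℕ)
    (ρ : Ordinal.{0}) (σ : List ℕ)
    (x : Set Ordinal) (hgood : Good f ρ σ x) :
    ∀ i ∈ σ, ∃ y ⊆ x, Homog f y i ∧ OT y ρ := by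
  rcases eq_zero_or_pos ρ with rfl | hρ
  · exact fun _ _ => ⟨∅, Set.empty_subset x, fun _ h => h.elim, OT_empty⟩
  · exact hgood.exists_homog hρ

/-- If `x ⊆ λ` is `(ρ,σ)`-good, then for every color `i` in the range of `σ` there is
`y ⊆ x` that is `i`-homogeneous of order type `ρ`. -/
theorem good_homogeneous_subset (lam : Ordinal.{0}) (k : ℕ) (f : Ordinal → Ordinal → ℕ)
    (hf : ∀ a b, f a b < k) (ρ : Ordinal.{0}) (σ : List ℕ)
    (x : Set Ordinal) (hx : x ⊆ Set.Iio lam) (hgood : Good f ρ σ x) :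
    ∀ i ∈ σ, ∃ y ⊆ x, Homog f y i ∧ OT y ρ :=
  good_homogeneous_subset_general f ρ σ x hgood
end

section
/- For all n, k < ω there exists g(n,k) < ω such that every set-mapping of order k on a set of cardinality g(n,k) has a free set of cardinality n. -/
lemma setMapping_free_aux {g k : ℕ} (p : Fin g → Finset (Fin g))
    (hp : ∀ a, (p a).card ≤ k) (hap : ∀ a, a ∉ p a) :
    ∀ n (S : Finset (Fin g)), (2 * k + 1) * n ≤ S.card →
      ∃ F : Finset (Fin g), F ⊆ S ∧ F.card = n ∧ ∀ a ∈ F, ∀ b ∈ F, a ∉ p b := by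
  intro n
  induction n with
  | zero => exact fun S _ => ⟨∅, by simp⟩
  | succ n ih =>
    intro S hS
    have hSne : S.Nonempty := by
      rw [← Finset.card_pos]
      have : 0 < (2 * k + 1) * (n + 1) := by positivity
      omega
    set f : Fin g → ℕ := fun a => (p a ∩ S).card + (S.filter fun b => a ∈ p b).card with hf
    have hdouble : ∑ a ∈ S, (S.filter fun b => a ∈ p b).card = ∑ b ∈ S, (p b ∩ S).card := by
      have key : ∀ b : Fin g, (p b ∩ S).card = ∑ x ∈ S, if x ∈ p b then 1 else 0 :=
        fun b => by rw [Finset.inter_comm, ← Finset.filter_mem_eq_inter, Finset.card_filter]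
      simp only [Finset.card_filter]
      rw [Finset.sum_comm]
      exact Finset.sum_congr rfl fun b _ => (key b).symm
    have hsum : ∑ a ∈ S, f a ≤ 2 * k * S.card := by
      have h1 : ∑ a ∈ S, (p a ∩ S).card ≤ k * S.card := by
        calc ∑ a ∈ S, (p a ∩ S).card ≤ ∑ _a ∈ S, k := by
              apply Finset.sum_le_sum
              intro a _
              exact le_trans (Finset.card_le_card Finset.inter_subset_left) (hp a)
          _ = k * S.card := by rw [Finset.sum_const, smul_eq_mul, Nat.mul_comm]
      calc ∑ a ∈ S, f a = ∑ a ∈ S, (p a ∩ S).card + ∑ a ∈ S, (S.filter fun b => a ∈ p b).card := by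
            rw [← Finset.sum_add_distrib]
        _ = ∑ a ∈ S, (p a ∩ S).card + ∑ b ∈ S, (p b ∩ S).card := by rw [hdouble]
        _ ≤ k * S.card + k * S.card := by omega
        _ = 2 * k * S.card := by ring
    have hex : ∃ a ∈ S, f a ≤ 2 * k := by
      by_contra h
      push_neg at h
      have : ∑ a ∈ S, (2 * k + 1) ≤ ∑ a ∈ S, f a := Finset.sum_le_sum fun a ha => h a ha
      rw [Finset.sum_const, smul_eq_mul] at this
      have hc : 0 < S.card := Finset.card_pos.mpr hSne
      nlinarith
    obtain ⟨a, haS, hfa⟩ := hex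
    set T : Finset (Fin g) := insert a ((p a ∩ S) ∪ S.filter fun b => a ∈ p b) with hT
    have hTS : T ⊆ S := by
      intro x hx
      rw [hT, Finset.mem_insert] at hx
      rcases hx with rfl | hx
      · exact haS
      · rcases Finset.mem_union.mp hx with hx | hx
        · exact (Finset.mem_inter.mp hx).2
        · exact (Finset.mem_filter.mp hx).1
    have hTcard : T.card ≤ 2 * k + 1 := by
      calc T.card ≤ ((p a ∩ S) ∪ S.filter fun b => a ∈ p b).card + 1 :=
            Finset.card_insert_le _ _
        _ ≤ (p a ∩ S).card + (S.filter fun b => a ∈ p b).card + 1 := by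
            have := Finset.card_union_le (p a ∩ S) (S.filter fun b => a ∈ p b)
            omega
        _ ≤ 2 * k + 1 := by simpa [hf] using hfa
    have hS'card : (2 * k + 1) * n ≤ (S \ T).card := by
      have := Finset.card_sdiff_of_subset hTS
      have hmul : (2 * k + 1) * (n + 1) = (2 * k + 1) * n + (2 * k + 1) := by ring
      omega
    obtain ⟨F, hFS, hFcard, hFfree⟩ := ih (S \ T) hS'card
    have haF : a ∉ F := fun h => by
      have := hFS h
      rw [Finset.mem_sdiff] at this
      exact this.2 (Finset.mem_insert_self a _)
    have hFS' : ∀ x ∈ F, x ∈ S ∧ x ∉ T := fun x hx => Finset.mem_sdiff.mp (hFS hx)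
    refine ⟨insert a F, ?_, ?_, ?_⟩
    · intro x hx
      rcases Finset.mem_insert.mp hx with rfl | hx
      · exact haS
      · exact (hFS' x hx).1
    · rw [Finset.card_insert_of_notMem haF, hFcard]
    · intro x hx y hy
      rw [Finset.mem_insert] at hx hy
      rcases hx with rfl | hx
      · rcases hy with rfl | hy
        · exact hap _
        · obtain ⟨hyS, hyT⟩ := hFS' y hy
          intro hcon
          exact hyT (Finset.mem_insert_of_mem (Finset.mem_union_right _
            (Finset.mem_filter.mpr ⟨hyS, hcon⟩)))
      · rcases hy with rfl | hy
        · obtain ⟨hxS, hxT⟩ := hFS' x hx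
          intro hcon
          exact hxT (Finset.mem_insert_of_mem (Finset.mem_union_left _
            (Finset.mem_inter.mpr ⟨hcon, hxS⟩)))
        · exact hFfree x hx y hy

/-- For all `n, k < ω` there is `g(n,k) < ω` such that every set-mapping of order `k`
(`p a` a set of size `< k` with `a ∉ p a`) on a set of cardinality `g(n,k)` has a free
set of cardinality `n`. -/
theorem setMapping_free (n k : ℕ) :
    ∃ g : ℕ, ∀ p : Fin g → Finset (Fin g),
      (∀ a, (p a).card < k) → (∀ a, a ∉ p a) →
      ∃ F : Finset (Fin g), F.card = n ∧ ∀ a ∈ F, ∀ b ∈ F, a ∉ p b := by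
  refine ⟨(2 * k + 1) * n, fun p hp hap => ?_⟩
  obtain ⟨F, _, hc, hfree⟩ := setMapping_free_aux p (fun a => le_of_lt (hp a)) hap n
    Finset.univ (by simp)
  exact ⟨F, hc, hfree⟩
end

section
/- Let κ be regular and λ = (2^{<κ})^+. If λ ↛ (κ + log κ)^2_2, then for every ordinal α < λ^+ we have α ↛ (κ+log κ, κ+log κ, ω)^2: there is a 3-coloring of pairs from α with no 0- or 1-homogeneous set of type κ+log κ and no 2-homogeneous set of type ω. -/
open Cardinal Ordinal

/-- `log κ`: the least cardinal `μ` with `2^μ ≥ κ`. -/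
noncomputable def clog (κ : Cardinal.{0}) : Cardinal.{0} := sInf {μ : Cardinal | κ ≤ 2 ^ μ}

open Set

/-! Since `|α| ≤ λ`, some `h` injects `α` into `λ`. Colour a pair `a < b` of `α` by the given
2-colouring `f` of `λ` at `(h a, h b)` when `h a < h b`, and by the new colour 2 otherwise. On a set
homogeneous in colour 0 or 1, `h` is strictly increasing, so it carries that set onto an
`f`-homogeneous set of the same order type. On a set homogeneous in colour 2, `h` is strictly
decreasing, which rules out order type `ω` by well-foundedness. -/

lemma OT.image {X : Set Ordinal.{0}} {o : Ordinal.{0}} {h : Ordinal → Ordinal} (hX : OT X o)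
    (hh : StrictMonoOn h X) : OT (h '' X) o :=
  (Ordinal.type_eq.2 ⟨(hh.orderIso h X).toRelIsoLT.symm⟩).trans hX

lemma exists_strictMono_of_OT_omega0 {X : Set Ordinal.{0}} (hX : OT X ω) :
    ∃ s : ℕ → Ordinal, StrictMono s ∧ ∀ n, s n ∈ X := by
  have hty : Ordinal.lift.{1} (otype X) =
      Ordinal.lift.{1} (Ordinal.type ((· < ·) : ℕ → ℕ → Prop)) := by
    rw [Ordinal.lift_id, hX, Ordinal.type_nat_lt, Ordinal.lift_omega0]
  obtain ⟨e⟩ := Ordinal.lift_type_eq.{1, 0, 1}.1 hty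
  exact ⟨fun n => (e.symm n).1, fun m n hmn => e.symm.map_rel_iff.2 hmn, fun n => (e.symm n).2⟩

lemma not_OT_omega0_of_strictAntiOn {β : Type*} [Preorder β] [WellFoundedLT β]
    {X : Set Ordinal.{0}} {h : Ordinal → β} (hh : StrictAntiOn h X) : ¬ OT X ω := fun hX => by
  obtain ⟨s, hs, hsX⟩ := exists_strictMono_of_OT_omega0 hX
  exact not_strictAnti_of_wellFoundedLT (h ∘ s) fun m n hmn => hh (hsX m) (hsX n) (hs hmn)

lemma exists_injOn_mapsTo_Iio_ord {α : Ordinal.{0}} {c : Cardinal.{0}} (hα : α.card ≤ c) :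
    ∃ h : Ordinal → Ordinal, (Iio α).InjOn h ∧ (Iio α).MapsTo h (Iio c.ord) := by
  obtain ⟨e⟩ : #(Iio α) ≤ #(Iio c.ord) := by
    rw [Cardinal.mk_Iio_ordinal, Cardinal.mk_Iio_ordinal, Cardinal.card_ord]
    exact Cardinal.lift_le.2 hα
  let h := Function.extend Subtype.val (fun x => (e x : Ordinal)) (fun _ => 0)
  have hval : ∀ x : Iio α, h x = e x := Subtype.val_injective.extend_apply _ _
  have hres : (Iio α).domRestrict h = Subtype.val ∘ e := funext hval
  exact ⟨h, injOn_iff_injective.2 (hres ▸ Subtype.val_injective.comp e.injective),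
    fun a ha => hval ⟨a, ha⟩ ▸ (e _).2⟩

noncomputable def pullbackColoring (f : Ordinal → Ordinal → Fin 2) (h : Ordinal → Ordinal)
    (a b : Ordinal) : Fin 3 :=
  if h a < h b then (f (h a) (h b)).castSucc else Fin.last 2

section pullbackColoring

variable {f : Ordinal → Ordinal → Fin 2} {h : Ordinal → Ordinal} {X : Set Ordinal}

lemma strictMonoOn_of_homog_pullbackColoring_castSucc {j : Fin 2}
    (hX : Homog (pullbackColoring f h) X j.castSucc) : StrictMonoOn h X := fun a ha b hb hab => by
  by_contra hlt
  have hcol := hX a ha b hb hab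
  rw [pullbackColoring, if_neg hlt] at hcol
  exact (Fin.castSucc_lt_last j).ne' hcol

lemma homog_image_of_homog_pullbackColoring_castSucc {j : Fin 2}
    (hX : Homog (pullbackColoring f h) X j.castSucc) : Homog f (h '' X) j := by
  have hmono := strictMonoOn_of_homog_pullbackColoring_castSucc hX
  rintro _ ⟨a, ha, rfl⟩ _ ⟨b, hb, rfl⟩ hlt
  have hcol := hX a ha b hb ((hmono.lt_iff_lt ha hb).1 hlt)
  rwa [pullbackColoring, if_pos hlt, Fin.castSucc_inj] at hcol

lemma strictAntiOn_of_homog_pullbackColoring_last (hinj : InjOn h X)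
    (hX : Homog (pullbackColoring f h) X (Fin.last 2)) : StrictAntiOn h X :=
  fun a ha b hb hab => (lt_or_gt_of_ne (hinj.ne ha hb hab.ne)).resolve_left fun hlt => by
    have hcol := hX a ha b hb hab
    rw [pullbackColoring, if_pos hlt] at hcol
    exact (Fin.castSucc_lt_last _).ne hcol

end pullbackColoring

theorem prop_5_6_general (κ : Cardinal.{0})
    (hneg : ∃ f : Ordinal → Ordinal → Fin 2,
      ∀ X ⊆ Set.Iio (Order.succ (twoLT κ)).ord, ∀ i, Homog f X i →
        ¬ OT X (κ.ord + (clog κ).ord)) :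
    ∀ α < (Order.succ (Order.succ (twoLT κ))).ord,
      ∃ g : Ordinal → Ordinal → Fin 3, ∀ X ⊆ Set.Iio α,
        (Homog g X 0 → ¬ OT X (κ.ord + (clog κ).ord)) ∧
        (Homog g X 1 → ¬ OT X (κ.ord + (clog κ).ord)) ∧
        (Homog g X 2 → ¬ OT X Ordinal.omega0) := by
  obtain ⟨f, hf⟩ := hneg
  intro α hα
  obtain ⟨h, hinj, hmaps⟩ :=
    exists_injOn_mapsTo_Iio_ord (Order.lt_succ_iff.1 (Cardinal.lt_ord.1 hα))
  have hcastSucc : ∀ X ⊆ Iio α, ∀ j : Fin 2,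
      Homog (pullbackColoring f h) X j.castSucc → ¬ OT X (κ.ord + (clog κ).ord) :=
    fun X hX j hj hOT =>
      hf (h '' X) (hmaps.mono_left hX).image_subset j
        (homog_image_of_homog_pullbackColoring_castSucc hj)
        (hOT.image (strictMonoOn_of_homog_pullbackColoring_castSucc hj))
  exact ⟨pullbackColoring f h, fun X hX => ⟨hcastSucc X hX 0, hcastSucc X hX 1,
    fun hlast => not_OT_omega0_of_strictAntiOn
      (strictAntiOn_of_homog_pullbackColoring_last (hinj.mono hX) hlast)⟩⟩

/-- (Proposition 5.6) If `λ ↛ (κ + log κ)²₂` then `α ↛ (κ+log κ, κ+log κ, ω)²`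
for every `α < λ⁺`. -/
theorem prop_5_6 (κ : Cardinal.{0}) (hκ : κ.IsRegular)
    (hneg : ∃ f : Ordinal → Ordinal → Fin 2,
      ∀ X ⊆ Set.Iio (Order.succ (twoLT κ)).ord, ∀ i, Homog f X i →
        ¬ OT X (κ.ord + (clog κ).ord)) :
    ∀ α < (Order.succ (Order.succ (twoLT κ))).ord,
      ∃ g : Ordinal → Ordinal → Fin 3, ∀ X ⊆ Set.Iio α,
        (Homog g X 0 → ¬ OT X (κ.ord + (clog κ).ord)) ∧
        (Homog g X 1 → ¬ OT X (κ.ord + (clog κ).ord)) ∧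
        (Homog g X 2 → ¬ OT X Ordinal.omega0) :=
  prop_5_6_general κ hneg
end
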